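/- Let X be a bounded geometry metric space, let R>0, let M bound the cardinality of all balls of radius R in X, and let Δ_R be the Laplacian at scale R. Then for every norm-one ξ ∈ ℓ²(X), Σ_{(x,y): d(x,y)≤R} | |ξ(x)|² − |ξ(y)|² | ≤ √(2⟨Δ_R ξ, ξ⟩) · √(4M). -/

import Mathlib

/-!
Formalization of statements from "Ghostbusting and property A" (Roe–Willett).
`L2 X` is ℓ²(X) with complex coefficients, `diracDelta x` the Dirac basis vector δ_x,
`matrixEntry T x y = ⟨δ_x, T δ_y⟩`.
-/

noncomputable section

open Metric Set

/-- ℓ²(X) with complex coefficients. -/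
abbrev L2 (X : Type*) := lp (fun _ : X => ℂ) 2

/-- The Dirac mass δ_x ∈ ℓ²(X). -/
def diracDelta {X : Type*} (x : X) : L2 X :=
  letI := Classical.decEq X
  lp.single 2 x 1

/-- The matrix entry T_{xy} = ⟨δ_x, T δ_y⟩ of a bounded operator on ℓ²(X). -/
def matrixEntry {X : Type*} (T : L2 X →L[ℂ] L2 X) (x y : X) : ℂ :=
  inner ℂ (diracDelta x) (T (diracDelta y))

/-- A metric space has bounded geometry if for each `R > 0` there is a uniform
bound on the cardinality of all balls of radius `R`. -/
def BoundedGeometry (X : Type*) [MetricSpace X] : Prop :=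
  ∀ R : ℝ, 0 < R → ∃ N : ℕ, ∀ x : X,
    (Metric.closedBall x R).Finite ∧ (Metric.closedBall x R).ncard ≤ N

/-- `T` has propagation at most `R`: the matrix entries vanish whenever `d(x,y) > R`.
(`T ∈ ℂ_R[X]` in the notation of the paper.) -/
def HasPropagationLE {X : Type*} [MetricSpace X] (T : L2 X →L[ℂ] L2 X) (R : ℝ) : Prop :=
  ∀ x y : X, R < dist x y → matrixEntry T x y = 0

/-- The uniform Roe algebra C*_u(X): the operator-norm closure of the set of
finite propagation operators. -/
def UniformRoeAlgebra (X : Type*) [MetricSpace X] : Set (L2 X →L[ℂ] L2 X) :=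
  closure {T | ∃ R : ℝ, 0 ≤ R ∧ HasPropagationLE T R}

/-- `T` is a ghost: its matrix entries tend to 0 at infinity, i.e. for every `ε > 0`
all entries with at least one index outside some finite set have modulus `< ε`. -/
def IsGhost {X : Type*} [MetricSpace X] (T : L2 X →L[ℂ] L2 X) : Prop :=
  ∀ ε : ℝ, 0 < ε → ∃ F : Finset X, ∀ x y : X, (x ∉ F ∨ y ∉ F) → ‖matrixEntry T x y‖ < ε

/-- `Δ` is the Laplacian at scale `R` on ℓ²(X): for every `x`, if `s` is the (finite)
set of points at distance at most `R` from `x`, then `Δ δ_x = Σ_{y ∈ s} (δ_x - δ_y)`. -/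
def IsLaplacianAtScale {X : Type*} [MetricSpace X] (R : ℝ) (Δ : L2 X →L[ℂ] L2 X) : Prop :=
  ∀ (x : X) (s : Finset X), (∀ y : X, y ∈ s ↔ dist x y ≤ R) →
    Δ (diracDelta x) = ∑ y ∈ s, (diracDelta x - diracDelta y)

/-!
Expanding `Δ` on the truncations `∑_{x ∈ F} ξ(x) δ_x` and symmetrising over pairs shows that
`2 Re ⟨Δ ξ, ξ⟩` dominates `∑ |ξ(x) - ξ(y)|²` over any finite set of pairs with `d(x, y) ≤ R`.
Writing `|ξ(x)|² - |ξ(y)|² = (|ξ(x)| - |ξ(y)|)(|ξ(x)| + |ξ(y)|)`, Cauchy–Schwarz bounds the sum by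
`√(2 Re ⟨Δ ξ, ξ⟩)` times `√(∑ (|ξ(x)| + |ξ(y)|)²)`, and the latter sum is at most
`2 ∑ (|ξ(x)|² + |ξ(y)|²) ≤ 4M`, because each point is a coordinate of at most `M` such pairs.
-/

open Filter Topology
open scoped Finset

lemma abs_sq_norm_sub_sq_norm_le {E : Type*} [SeminormedAddCommGroup E] (a b : E) :
    |‖a‖ ^ 2 - ‖b‖ ^ 2| ≤ ‖a - b‖ * (‖a‖ + ‖b‖) := by
  rw [sq_sub_sq, abs_mul, abs_of_nonneg (by positivity), mul_comm]
  gcongr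
  exact abs_norm_sub_norm_le a b

lemma two_mul_sum_re_inner_sub_eq_sum_norm_sq {𝕜 E α : Type*} [RCLike 𝕜]
    [SeminormedAddCommGroup E] [InnerProductSpace 𝕜 E] {P : Finset (α × α)}
    (hP : ∀ q ∈ P, q.swap ∈ P) (f : α → E) :
    2 * ∑ q ∈ P, RCLike.re (inner 𝕜 (f q.1) (f q.1 - f q.2)) = ∑ q ∈ P, ‖f q.1 - f q.2‖ ^ 2 := by
  have hswap : ∑ q ∈ P, RCLike.re (inner 𝕜 (f q.1) (f q.1 - f q.2)) =
      ∑ q ∈ P, RCLike.re (inner 𝕜 (f q.2) (f q.2 - f q.1)) :=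
    Finset.sum_equiv (Equiv.prodComm α α) (fun q => ⟨hP q, fun h => by simpa using hP _ h⟩)
      (fun _ _ => rfl)
  rw [two_mul]
  nth_rw 2 [hswap]
  rw [← Finset.sum_add_distrib]
  refine Finset.sum_congr rfl fun q _ => ?_
  rw [← inner_self_eq_norm_sq (𝕜 := 𝕜), ← map_add, ← neg_sub (f q.1) (f q.2), inner_neg_right,
    ← sub_eq_add_neg, ← inner_sub_left]

section Dirac

variable {X : Type*}

lemma inner_diracDelta_left (x : X) (v : L2 X) : inner ℂ (diracDelta x) v = v x := by
  classical
  simp [diracDelta, lp.inner_single_left]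

lemma smul_diracDelta (x : X) (a : ℂ) [DecidableEq X] : a • diracDelta x = lp.single 2 x a := by
  ext y
  rcases eq_or_ne y x with rfl | hyx <;> simp [diracDelta, *]

def truncate (F : Finset X) (ξ : L2 X) : L2 X :=
  ∑ x ∈ F, ξ x • diracDelta x

lemma truncate_apply (F : Finset X) (ξ : L2 X) (y : X) [DecidableEq X] :
    truncate F ξ y = if y ∈ F then ξ y else 0 := by
  simp only [truncate, smul_diracDelta, lp.coeFn_sum, Finset.sum_apply, lp.single_apply,
    Finset.sum_pi_single]

lemma tendsto_truncate (ξ : L2 X) : Tendsto (truncate · ξ) atTop (𝓝 ξ) := by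
  classical
  simpa only [HasSum, SummationFilter.unconditional_filter, truncate, smul_diracDelta] using
    lp.hasSum_single ENNReal.ofNat_ne_top ξ

lemma sum_norm_sq_le_norm_sq (ξ : L2 X) (s : Finset X) : ∑ x ∈ s, ‖ξ x‖ ^ 2 ≤ ‖ξ‖ ^ 2 := by
  simpa using lp.sum_rpow_le_norm_rpow (p := 2) (by norm_num) ξ s

end Dirac

section Laplacian

variable {X : Type*} [MetricSpace X] {R : ℝ} {Δ : L2 X →L[ℂ] L2 X}

lemma inner_laplacian_diracDelta (hΔ : IsLaplacianAtScale R Δ) {x : X}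
    (hx : (closedBall x R).Finite) (v : L2 X) :
    inner ℂ (Δ (diracDelta x)) v = ∑ y ∈ hx.toFinset, (v x - v y) := by
  rw [hΔ x hx.toFinset (by simp [dist_comm]), sum_inner]
  simp only [inner_sub_left, inner_diracDelta_left]

lemma inner_laplacian_truncate (hΔ : IsLaplacianAtScale R Δ)
    (hfin : ∀ x : X, (closedBall x R).Finite) (F : Finset X) (ξ : L2 X) :
    inner ℂ (Δ (truncate F ξ)) (truncate F ξ) =
      ∑ x ∈ F, ∑ y ∈ (hfin x).toFinset, inner ℂ (ξ x) (ξ x - truncate F ξ y) := by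
  classical
  have hΔξ : Δ (truncate F ξ) = ∑ x ∈ F, ξ x • Δ (diracDelta x) := by
    simp only [truncate, map_sum, map_smul]
  rw [hΔξ, sum_inner]
  refine Finset.sum_congr rfl fun x hx => ?_
  rw [inner_smul_left, inner_laplacian_diracDelta hΔ (hfin x), Finset.mul_sum, truncate_apply,
    if_pos hx]
  simp only [RCLike.inner_apply']

lemma sum_norm_sub_sq_le_re_inner_laplacian_truncate (hΔ : IsLaplacianAtScale R Δ)
    (hfin : ∀ x : X, (closedBall x R).Finite) (F : Finset X) (ξ : L2 X) :
    ∑ q ∈ (F ×ˢ F).filter (fun q => dist q.1 q.2 ≤ R), ‖ξ q.1 - ξ q.2‖ ^ 2 ≤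
      2 * (inner ℂ (Δ (truncate F ξ)) (truncate F ξ)).re := by
  classical
  have hsymm : ∀ q ∈ (F ×ˢ F).filter (fun q => dist q.1 q.2 ≤ R),
      q.swap ∈ (F ×ˢ F).filter (fun q => dist q.1 q.2 ≤ R) := by
    simp +contextual [dist_comm, and_comm]
  rw [← two_mul_sum_re_inner_sub_eq_sum_norm_sq (𝕜 := ℂ) hsymm, inner_laplacian_truncate hΔ hfin,
    Finset.sum_filter, Finset.sum_product, Complex.re_sum]
  gcongr with x hx
  rw [← Finset.sum_filter, Complex.re_sum]
  calc ∑ y ∈ F with dist x y ≤ R, RCLike.re (inner ℂ (ξ x) (ξ x - ξ y))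
      = ∑ y ∈ F with dist x y ≤ R, (inner ℂ (ξ x) (ξ x - truncate F ξ y)).re :=
        Finset.sum_congr rfl fun y hy => by
          rw [truncate_apply, if_pos (Finset.mem_filter.1 hy).1]; rfl
    _ ≤ ∑ y ∈ (hfin x).toFinset, (inner ℂ (ξ x) (ξ x - truncate F ξ y)).re := by
        refine Finset.sum_le_sum_of_subset_of_nonneg
          (fun y => by simp +contextual [dist_comm]) fun y _ hy => ?_
        have hyF : y ∉ F := fun h => hy (by simp_all [dist_comm])
        rw [truncate_apply, if_neg hyF, sub_zero]
        exact inner_self_nonneg (𝕜 := ℂ) (x := ξ x)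

lemma sum_norm_sub_sq_le_re_inner_laplacian (hΔ : IsLaplacianAtScale R Δ)
    (hfin : ∀ x : X, (closedBall x R).Finite) (ξ : L2 X) {P : Finset (X × X)}
    (hP : ∀ q ∈ P, dist q.1 q.2 ≤ R) :
    ∑ q ∈ P, ‖ξ q.1 - ξ q.2‖ ^ 2 ≤ 2 * (inner ℂ (Δ ξ) ξ).re := by
  classical
  have hlim : Tendsto (fun F => 2 * (inner ℂ (Δ (truncate F ξ)) (truncate F ξ)).re) atTop
      (𝓝 (2 * (inner ℂ (Δ ξ) ξ).re)) :=
    ((by fun_prop : Continuous fun η : L2 X => 2 * (inner ℂ (Δ η) η).re).tendsto ξ).comp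
      (tendsto_truncate ξ)
  refine ge_of_tendsto hlim ?_
  filter_upwards [eventually_ge_atTop (P.image Prod.fst ∪ P.image Prod.snd)] with F hF
  refine le_trans (Finset.sum_le_sum_of_subset_of_nonneg (fun q hq => ?_)
    fun _ _ _ => by positivity) (sum_norm_sub_sq_le_re_inner_laplacian_truncate hΔ hfin F ξ)
  simp only [Finset.mem_filter, Finset.mem_product]
  exact ⟨⟨hF (Finset.mem_union_left _ (Finset.mem_image_of_mem _ hq)),
    hF (Finset.mem_union_right _ (Finset.mem_image_of_mem _ hq))⟩, hP q hq⟩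

lemma sum_norm_sq_fst_le {M : ℕ}
    (hM : ∀ x : X, (closedBall x R).Finite ∧ (closedBall x R).ncard ≤ M) (ξ : L2 X)
    {P : Finset (X × X)} (hP : ∀ q ∈ P, dist q.1 q.2 ≤ R) :
    ∑ q ∈ P, ‖ξ q.1‖ ^ 2 ≤ M * ‖ξ‖ ^ 2 := by
  classical
  have hfiber : ∀ x, #{q ∈ P | q.1 = x} ≤ M := by
    intro x
    calc #{q ∈ P | q.1 = x} ≤ #(hM x).1.toFinset := by
          refine Finset.card_le_card_of_injOn Prod.snd (fun q hq => ?_) fun q hq q' hq' h => ?_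
          · simp only [Finset.coe_filter, Set.mem_ofPred_eq] at hq
            simpa [← hq.2, dist_comm] using hP q hq.1
          · simp only [Finset.coe_filter, Set.mem_ofPred_eq] at hq hq'
            exact Prod.ext (hq.2.trans hq'.2.symm) h
      _ ≤ M := by rw [← Set.ncard_eq_toFinset_card _ (hM x).1]; exact (hM x).2
  calc ∑ q ∈ P, ‖ξ q.1‖ ^ 2
      = ∑ x ∈ P.image Prod.fst, #{q ∈ P | q.1 = x} • ‖ξ x‖ ^ 2 :=
        Finset.sum_comp (fun x => ‖ξ x‖ ^ 2) Prod.fst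
    _ ≤ ∑ x ∈ P.image Prod.fst, M * ‖ξ x‖ ^ 2 := by
        gcongr with x
        rw [nsmul_eq_mul]
        gcongr
        exact_mod_cast hfiber x
    _ ≤ M * ‖ξ‖ ^ 2 := by
        rw [← Finset.mul_sum]
        gcongr
        exact sum_norm_sq_le_norm_sq ξ _

lemma sum_abs_sq_norm_sub_sq_norm_le {M : ℕ} (hΔ : IsLaplacianAtScale R Δ)
    (hM : ∀ x : X, (closedBall x R).Finite ∧ (closedBall x R).ncard ≤ M) {ξ : L2 X}
    (hξ : ‖ξ‖ = 1) {P : Finset (X × X)} (hP : ∀ q ∈ P, dist q.1 q.2 ≤ R) :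
    ∑ q ∈ P, |‖ξ q.1‖ ^ 2 - ‖ξ q.2‖ ^ 2| ≤
      √(2 * (inner ℂ (Δ ξ) ξ).re) * √(4 * (M : ℝ)) := by
  have hfst := sum_norm_sq_fst_le hM ξ hP
  have hsnd : ∑ q ∈ P, ‖ξ q.2‖ ^ 2 ≤ M * ‖ξ‖ ^ 2 := by
    have hswap : ∀ q ∈ P.map (Equiv.prodComm X X).toEmbedding, dist q.1 q.2 ≤ R := by
      simpa using fun a b (h : (b, a) ∈ P) => (dist_comm a b).trans_le (hP _ h)
    simpa [Finset.sum_map] using sum_norm_sq_fst_le hM ξ hswap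
  calc ∑ q ∈ P, |‖ξ q.1‖ ^ 2 - ‖ξ q.2‖ ^ 2|
      ≤ ∑ q ∈ P, ‖ξ q.1 - ξ q.2‖ * (‖ξ q.1‖ + ‖ξ q.2‖) :=
        Finset.sum_le_sum fun q _ => abs_sq_norm_sub_sq_norm_le _ _
    _ ≤ √(∑ q ∈ P, ‖ξ q.1 - ξ q.2‖ ^ 2) * √(∑ q ∈ P, (‖ξ q.1‖ + ‖ξ q.2‖) ^ 2) :=
        Real.sum_mul_le_sqrt_mul_sqrt _ _ _
    _ ≤ √(2 * (inner ℂ (Δ ξ) ξ).re) * √(4 * (M : ℝ)) := by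
        gcongr
        · exact sum_norm_sub_sq_le_re_inner_laplacian hΔ (fun x => (hM x).1) ξ hP
        · calc ∑ q ∈ P, (‖ξ q.1‖ + ‖ξ q.2‖) ^ 2
              ≤ ∑ q ∈ P, (2 * ‖ξ q.1‖ ^ 2 + 2 * ‖ξ q.2‖ ^ 2) :=
                Finset.sum_le_sum fun q _ => by nlinarith [sq_nonneg (‖ξ q.1‖ - ‖ξ q.2‖)]
            _ ≤ 4 * M := by
                rw [Finset.sum_add_distrib, ← Finset.mul_sum, ← Finset.mul_sum]
                rw [hξ] at hfst hsnd
                linarith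

end Laplacian

theorem laplacian_cauchy_schwarz_bound_general (X : Type*) [MetricSpace X]
    (R : ℝ) (M : ℕ)
    (hM : ∀ x : X, (Metric.closedBall x R).Finite ∧ (Metric.closedBall x R).ncard ≤ M)
    (Δ : L2 X →L[ℂ] L2 X) (hΔ : IsLaplacianAtScale R Δ)
    (ξ : L2 X) (hξ : ‖ξ‖ = 1) :
    ∑' p : {q : X × X // dist q.1 q.2 ≤ R}, |‖ξ p.1.1‖ ^ 2 - ‖ξ p.1.2‖ ^ 2| ≤
      Real.sqrt (2 * (inner ℂ (Δ ξ) ξ : ℂ).re) * Real.sqrt (4 * (M : ℝ)) := by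
  refine tsum_le_of_sum_le' (by positivity) fun P => ?_
  simpa [Finset.sum_map] using sum_abs_sq_norm_sub_sq_norm_le hΔ hM hξ
    (P := P.map (Function.Embedding.subtype _)) (by simp +contextual)

/-- If `M` bounds the cardinality of all balls of radius `R` in `X`, then for every
norm-one `ξ ∈ ℓ²(X)`,
`Σ_{(x,y) : d(x,y) ≤ R} | |ξ(x)|² - |ξ(y)|² | ≤ √(2 ⟨Δ_R ξ, ξ⟩) · √(4M)`. -/
theorem laplacian_cauchy_schwarz_bound (X : Type*) [MetricSpace X]
    (hbg : BoundedGeometry X) (R : ℝ) (hR : 0 < R) (M : ℕ)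
    (hM : ∀ x : X, (Metric.closedBall x R).Finite ∧ (Metric.closedBall x R).ncard ≤ M)
    (Δ : L2 X →L[ℂ] L2 X) (hΔ : IsLaplacianAtScale R Δ)
    (ξ : L2 X) (hξ : ‖ξ‖ = 1) :
    ∑' p : {q : X × X // dist q.1 q.2 ≤ R}, |‖ξ p.1.1‖ ^ 2 - ‖ξ p.1.2‖ ^ 2| ≤
      Real.sqrt (2 * (inner ℂ (Δ ξ) ξ : ℂ).re) * Real.sqrt (4 * (M : ℝ)) :=
  laplacian_cauchy_schwarz_bound_general X R M hM Δ hΔ ξ hξ
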